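/- arXiv:1409.6142 — 2 statements merged into one kernel-verified Lean document; each statement's English description precedes it below -/
import Mathlib

section
/- Let A = (Q, Σ, δ, ρ) be an invertible-reversible Mealy automaton and let u be a nonempty word over Q. The following are equivalent: (i) the permutation ρ_u of Σ* has finite order; (ii) there is a bound B such that for every n the orbit of u^n in Q^{n|u|} has size at most B; (iii) there is a word v over Q and a bound B such that for every n the orbit of v u^n in Q^{|v|+n|u|} has size at most B; (iv) for every word v over Q there is a bound B_v such that for every n the orbit of v u^n has size at most B_v. -/
namespace MealyFormal

variable {Q X : Type*}

/-- Extended transition function of the dual automaton: the action of a letter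
`i ∈ Σ` on words over the stateset `Q`, defined by
`δ_i(ε) = ε` and `δ_i(x w) = δ_i(x) δ_{ρ_x(i)}(w)`. -/
def dExt (δ : X → Q → Q) (ρ : Q → X → X) : X → List Q → List Q
  | _, [] => []
  | i, x :: w => δ i x :: dExt δ ρ (ρ x i) w

/-- The action `δ_s = δ_{s_n} ∘ ⋯ ∘ δ_{s_1}` of a word `s` over `Σ` on words over `Q`. -/
def dWord (δ : X → Q → Q) (ρ : Q → X → X) : List X → List Q → List Q
  | [], u => u
  | i :: s, u => dWord δ ρ s (dExt δ ρ i u)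

/-- Extended production function: the action of a state `x ∈ Q` on words over the
alphabet `Σ`, defined by `ρ_x(ε) = ε` and `ρ_x(i s) = ρ_x(i) ρ_{δ_i(x)}(s)`. -/
def rExt (δ : X → Q → Q) (ρ : Q → X → X) : Q → List X → List X
  | _, [] => []
  | x, i :: s => ρ x i :: rExt δ ρ (δ i x) s

/-- The action `ρ_u = ρ_{x_n} ∘ ⋯ ∘ ρ_{x_1}` of a word `u = x_1⋯x_n` over `Q`
on words over `Σ`. -/
def rWord (δ : X → Q → Q) (ρ : Q → X → X) : List Q → List X → List X
  | [], s => s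
  | x :: u, s => rWord δ ρ u (rExt δ ρ x s)

/-- `v` lies in the orbit of `u` under the action of the dual automaton. -/
def InOrbit (δ : X → Q → Q) (ρ : Q → X → X) (u v : List Q) : Prop :=
  ∃ s : List X, dWord δ ρ s u = v

/-- The orbit (connected component of the corresponding power) of a word over `Q`. -/
def orbit (δ : X → Q → Q) (ρ : Q → X → X) (u : List Q) : Set (List Q) :=
  {v | InOrbit δ ρ u v}

/-- The action of the dual automaton on `Q^n` is transitive, i.e. `A^n` is connected. -/
def LevelTransitive (δ : X → Q → Q) (ρ : Q → X → X) (n : ℕ) : Prop :=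
  ∀ u v : List Q, u.length = n → v.length = n → InOrbit δ ρ u v

/-- The label `ℓ(u x)` of the nonempty word `u x`:
the number of `z ∈ Q` with `u z` in the orbit of `u x`. -/
noncomputable def label (δ : X → Q → Q) (ρ : Q → X → X) (u : List Q) (x : Q) : ℕ :=
  Set.ncard {z : Q | InOrbit δ ρ (u ++ [x]) (u ++ [z])}

/-- Prefix of length `i` of the (infinite) word `w = w_1 w_2 ⋯`. -/
def pref (w : ℕ → Q) (i : ℕ) : List Q := (List.range i).map w

/-- The `n`-th power `u^n` of a word `u`. -/
def wpow (u : List Q) (n : ℕ) : List Q := (List.replicate n u).flatten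

/-- The group generated by the Mealy automaton: the subgroup of permutations of `Σ*`
generated by the production functions `ρ_x`, `x ∈ Q`. -/
def autGroup (δ : X → Q → Q) (ρ : Q → X → X) : Subgroup (Equiv.Perm (List X)) :=
  Subgroup.closure {π : Equiv.Perm (List X) | ∃ q : Q, ⇑π = rExt δ ρ q}

/-- The semigroup of maps `Σ* → Σ*` generated under composition by the `ρ_x`, `x ∈ Q`. -/
def prodSemigroup (δ : X → Q → Q) (ρ : Q → X → X) :
    Subsemigroup (Function.End (List X)) :=
  Subsemigroup.closure {f : Function.End (List X) | ∃ q : Q, f = rExt δ ρ q}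

/-- The semigroup of maps `Q* → Q*` generated under composition by the `δ_i`, `i ∈ Σ`. -/
def dualSemigroup (δ : X → Q → Q) (ρ : Q → X → X) :
    Subsemigroup (Function.End (List Q)) :=
  Subsemigroup.closure {f : Function.End (List Q) | ∃ i : X, f = dExt δ ρ i}

/-- A word `w` over `Q` is orbital if all its factors of length `c+1`
belong to the reduction orbit `O2`. -/
def Orbital (c : ℕ) (O2 : Set (List Q)) (w : List Q) : Prop :=
  ∀ f : List Q, f.length = c + 1 → f <:+: w → f ∈ O2

/-- A word is cyclically orbital if each of its powers is orbital. -/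
def CycOrbital (c : ℕ) (O2 : Set (List Q)) (w : List Q) : Prop :=
  ∀ n : ℕ, Orbital c O2 (wpow w n)

/-- The standing setup: `A` is a connected invertible-reversible Mealy automaton
with 3 states, `0 < c = cd(A) < ∞`, and `Q^{c+1}` splits into exactly two orbits,
of sizes `2·3^c` and `3^c`; `O2` is the reduction orbit, of size `2·3^c`. -/
structure StandingSetup (δ : X → Q → Q) (ρ : Q → X → X) (c : ℕ) (O2 : Set (List Q)) :
    Prop where
  card_three : Nat.card Q = 3
  invertible : ∀ q : Q, Function.Bijective (ρ q)
  reversible : ∀ i : X, Function.Bijective (δ i)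
  connected : LevelTransitive δ ρ 1
  c_pos : 0 < c
  trans_c : LevelTransitive δ ρ c
  not_trans_succ : ¬ LevelTransitive δ ρ (c + 1)
  O2_is_orbit : ∃ w : List Q, w.length = c + 1 ∧ O2 = orbit δ ρ w
  O2_card : O2.ncard = 2 * 3 ^ c
  other_is_orbit : ∃ w : List Q, w.length = c + 1 ∧
    orbit δ ρ w = {v : List Q | v.length = c + 1} \ O2
  other_card : ({v : List Q | v.length = c + 1} \ O2).ncard = 3 ^ c


/-! ### Auxiliary lemmas -/

section Aux

variable (δ : X → Q → Q) (ρ : Q → X → X)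

/-- Thread a letter of `Σ` through a state word. -/
def thX : List Q → X → X
  | [], i => i
  | x :: w, i => thX w (ρ x i)

/-- Thread a state through a word over `Σ`. -/
def thQ : List X → Q → Q
  | [], x => x
  | i :: s, x => thQ s (δ i x)

@[simp] lemma dExt_nil (i : X) : dExt δ ρ i ([] : List Q) = [] := rfl
@[simp] lemma dExt_cons (i : X) (x : Q) (w : List Q) :
    dExt δ ρ i (x :: w) = δ i x :: dExt δ ρ (ρ x i) w := rfl
@[simp] lemma rExt_nil (x : Q) : rExt δ ρ x ([] : List X) = [] := rfl
@[simp] lemma rExt_cons (x : Q) (i : X) (s : List X) :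
    rExt δ ρ x (i :: s) = ρ x i :: rExt δ ρ (δ i x) s := rfl
@[simp] lemma dWord_nil (w : List Q) : dWord δ ρ [] w = w := rfl
@[simp] lemma dWord_cons (i : X) (s : List X) (w : List Q) :
    dWord δ ρ (i :: s) w = dWord δ ρ s (dExt δ ρ i w) := rfl
@[simp] lemma rWord_nil (s : List X) : rWord δ ρ [] s = s := rfl
@[simp] lemma rWord_cons (x : Q) (v : List Q) (s : List X) :
    rWord δ ρ (x :: v) s = rWord δ ρ v (rExt δ ρ x s) := rfl
@[simp] lemma thX_nil (i : X) : thX ρ ([] : List Q) i = i := rfl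
@[simp] lemma thX_cons (x : Q) (w : List Q) (i : X) :
    thX ρ (x :: w) i = thX ρ w (ρ x i) := rfl

@[simp] lemma rWord_nil_right (v : List Q) : rWord δ ρ v [] = [] := by
  induction v <;> simp [*]

@[simp] lemma dWord_nil_right (s : List X) : dWord δ ρ s [] = [] := by
  induction s <;> simp [*]

@[simp] lemma length_dExt (i : X) (w : List Q) : (dExt δ ρ i w).length = w.length := by
  induction w generalizing i <;> simp [*]

@[simp] lemma length_rExt (x : Q) (s : List X) : (rExt δ ρ x s).length = s.length := by
  induction s generalizing x <;> simp [*]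

@[simp] lemma length_dWord (s : List X) (w : List Q) :
    (dWord δ ρ s w).length = w.length := by
  induction s generalizing w <;> simp [*]

@[simp] lemma length_rWord (v : List Q) (s : List X) :
    (rWord δ ρ v s).length = s.length := by
  induction v generalizing s <;> simp [*]

lemma dExt_append (i : X) (v w : List Q) :
    dExt δ ρ i (v ++ w) = dExt δ ρ i v ++ dExt δ ρ (thX ρ v i) w := by
  induction v generalizing i <;> simp [*]

lemma rExt_append (x : Q) (s t : List X) :
    rExt δ ρ x (s ++ t) = rExt δ ρ x s ++ rExt δ ρ (thQ δ s x) t := by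
  induction s generalizing x <;> simp [*, thQ]

lemma rWord_cons_right (v : List Q) (i : X) (s : List X) :
    rWord δ ρ v (i :: s) = thX ρ v i :: rWord δ ρ (dExt δ ρ i v) s := by
  induction v generalizing i s with
  | nil => simp
  | cons x v ih => simp [ih]

lemma dWord_cons_right (s : List X) (x : Q) (v : List Q) :
    dWord δ ρ s (x :: v) = thQ δ s x :: dWord δ ρ (rExt δ ρ x s) v := by
  induction s generalizing x v with
  | nil => simp [thQ]
  | cons i s ih => simp [ih, thQ]

/-- Cross identity: action of `s` on a concatenation. -/
lemma dWord_append_right (s : List X) (v w : List Q) :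
    dWord δ ρ s (v ++ w) = dWord δ ρ s v ++ dWord δ ρ (rWord δ ρ v s) w := by
  induction s generalizing v w with
  | nil => simp
  | cons i s ih =>
      simp only [dWord_cons, dExt_append, ih, rWord_cons_right, dWord_cons]

/-- Cross identity: action of a state word on a concatenation. -/
lemma rWord_append_right (v : List Q) (s t : List X) :
    rWord δ ρ v (s ++ t) = rWord δ ρ v s ++ rWord δ ρ (dWord δ ρ s v) t := by
  induction v generalizing s t with
  | nil => simp
  | cons x v ih =>
      simp only [rWord_cons, rExt_append, ih, dWord_cons_right, rWord_cons]

lemma dWord_append_left (s t : List X) (w : List Q) :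
    dWord δ ρ (s ++ t) w = dWord δ ρ t (dWord δ ρ s w) := by
  induction s generalizing w <;> simp [*]

lemma rWord_append_left (v w : List Q) (s : List X) :
    rWord δ ρ (v ++ w) s = rWord δ ρ w (rWord δ ρ v s) := by
  induction v generalizing s <;> simp [*]

lemma rWord_singleton (v : List Q) (i : X) :
    rWord δ ρ v [i] = [thX ρ v i] := by
  simp [rWord_cons_right]

end Aux

section Aux2

variable (δ : X → Q → Q) (ρ : Q → X → X)

@[simp] lemma wpow_zero (u : List Q) : wpow u 0 = [] := rfl

lemma wpow_succ (u : List Q) (n : ℕ) : wpow u (n + 1) = u ++ wpow u n := by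
  simp [wpow, List.replicate_succ]

lemma wpow_add (u : List Q) (a b : ℕ) : wpow u (a + b) = wpow u a ++ wpow u b := by
  induction a with
  | zero => simp
  | succ a ih => rw [Nat.succ_add, wpow_succ, wpow_succ, ih, List.append_assoc]

lemma length_wpow (u : List Q) (n : ℕ) : (wpow u n).length = n * u.length := by
  induction n with
  | zero => simp
  | succ n ih => rw [wpow_succ]; simp [ih, Nat.succ_mul, Nat.add_comm]

lemma rWord_wpow (u : List Q) (n : ℕ) (s : List X) :
    rWord δ ρ (wpow u n) s = (rWord δ ρ u)^[n] s := by
  induction n generalizing s with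
  | zero => simp
  | succ n ih =>
      rw [wpow_succ, rWord_append_left, ih, Function.iterate_succ_apply]

lemma rExt_injective (hinv : ∀ q : Q, Function.Bijective (ρ q)) (x : Q) : Function.Injective (rExt δ ρ x) := by
  have key : ∀ (s : List X) (x : Q) (t : List X), rExt δ ρ x s = rExt δ ρ x t → s = t := by
    intro s
    induction s with
    | nil => intro x t h; cases t <;> simp_all
    | cons i s ih =>
        intro x t h
        cases t with
        | nil => simp_all
        | cons j t =>
            simp only [rExt_cons, List.cons.injEq] at h
            obtain ⟨h1, h2⟩ := h
            have hij : i = j := (hinv x).1 h1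
            subst hij
            exact congrArg _ (ih _ _ h2)
  exact fun s t h => key s x t h

lemma rWord_injective (hinv : ∀ q : Q, Function.Bijective (ρ q)) (v : List Q) : Function.Injective (rWord δ ρ v) := by
  induction v with
  | nil => intro s t h; simpa using h
  | cons x v ih =>
      intro s t h
      exact rExt_injective δ ρ hinv x (ih (by simpa using h))

lemma thX_bijective (hinv : ∀ q : Q, Function.Bijective (ρ q)) (w : List Q) : Function.Bijective (thX ρ w) := by
  induction w with
  | nil => exact Function.bijective_id
  | cons x w ih =>
      have := ih.comp (hinv x)
      rw [show thX ρ (x :: w) = fun i => thX ρ w (ρ x i) from funext fun i => rfl]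
      simpa [Function.comp_def] using this

end Aux2

section Aux3

variable (δ : X → Q → Q) (ρ : Q → X → X)

lemma dWord_mem_orbit (s : List X) (w : List Q) :
    dWord δ ρ s w ∈ orbit δ ρ w := ⟨s, rfl⟩

lemma orbit_finite [Finite Q] (w : List Q) : (orbit δ ρ w).Finite := by
  apply (List.finite_length_eq Q w.length).subset
  rintro v ⟨s, rfl⟩
  simp

lemma det (u : List Q) (k : ℕ) (hk0 : 0 < k)
    (hk : ∀ s, rWord δ ρ (wpow u k) s = s) :
    ∀ (n : ℕ) (t t' : List X), dWord δ ρ t (wpow u k) = dWord δ ρ t' (wpow u k) →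
      dWord δ ρ t (wpow u n) = dWord δ ρ t' (wpow u n) := by
  intro n
  induction n using Nat.strong_induction_on with
  | _ n ih =>
    intro t t' h
    rcases le_or_gt n k with hle | hlt
    · have hsplit : wpow u k = wpow u n ++ wpow u (k - n) := by
        rw [← wpow_add]; congr 1; omega
      rw [hsplit, dWord_append_right, dWord_append_right] at h
      exact (List.append_inj h (by simp)).1
    · have hsplit : wpow u n = wpow u k ++ wpow u (n - k) := by
        rw [← wpow_add]; congr 1; omega
      rw [hsplit, dWord_append_right, dWord_append_right, hk, hk, h]
      rw [ih (n - k) (by omega) t t' h]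

lemma bounded_of_finite_order [Finite Q] (u : List Q) (k : ℕ) (hk0 : 0 < k)
    (hk : ∀ s, rWord δ ρ (wpow u k) s = s) (v : List Q) (n : ℕ) :
    (orbit δ ρ (v ++ wpow u n)).ncard ≤
      {l : List Q | l.length ≤ v.length + k * u.length}.ncard := by
  set N := v.length + k * u.length with hN
  have hfin : {l : List Q | l.length ≤ N}.Finite := List.finite_length_le Q N
  have hinj : Set.InjOn (fun l => List.take N l) (orbit δ ρ (v ++ wpow u n)) := by
    rintro w1 ⟨s1, rfl⟩ w2 ⟨s2, rfl⟩ heq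
    rcases le_or_gt n k with hle | hlt
    · have hlen1 : (dWord δ ρ s1 (v ++ wpow u n)).length ≤ N := by
        have h1 : (dWord δ ρ s1 (v ++ wpow u n)).length = v.length + n * u.length := by
          simp [length_wpow]
        have hmul : n * u.length ≤ k * u.length := Nat.mul_le_mul hle (le_refl u.length)
        rw [h1]; omega
      have hlen2 : (dWord δ ρ s2 (v ++ wpow u n)).length ≤ N := by
        have h1 : (dWord δ ρ s2 (v ++ wpow u n)).length = v.length + n * u.length := by
          simp [length_wpow]
        have hmul : n * u.length ≤ k * u.length := Nat.mul_le_mul hle (le_refl u.length)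
        rw [h1]; omega
      simpa [List.take_of_length_le hlen1, List.take_of_length_le hlen2] using heq
    · have hsplit : wpow u n = wpow u k ++ wpow u (n - k) := by
        rw [← wpow_add]; congr 1; omega
      have expand : ∀ s : List X, dWord δ ρ s (v ++ wpow u n) =
          (dWord δ ρ s v ++ dWord δ ρ (rWord δ ρ v s) (wpow u k)) ++
            dWord δ ρ (rWord δ ρ v s) (wpow u (n - k)) := by
        intro s
        rw [dWord_append_right, hsplit, dWord_append_right, hk, List.append_assoc]
      have take_eq : ∀ s : List X, List.take N (dWord δ ρ s (v ++ wpow u n)) =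
          dWord δ ρ s v ++ dWord δ ρ (rWord δ ρ v s) (wpow u k) := by
        intro s
        rw [expand s]
        have : N = (dWord δ ρ s v ++ dWord δ ρ (rWord δ ρ v s) (wpow u k)).length := by
          simp [length_wpow, hN]
        rw [this, List.take_left]
      have heq' : dWord δ ρ s1 v ++ dWord δ ρ (rWord δ ρ v s1) (wpow u k) =
          dWord δ ρ s2 v ++ dWord δ ρ (rWord δ ρ v s2) (wpow u k) := by
        rw [← take_eq s1, ← take_eq s2]
        exact heq
      obtain ⟨h1, h2⟩ := List.append_inj heq' (by simp)
      rw [dWord_append_right, dWord_append_right, h1,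
        det δ ρ u k hk0 hk n _ _ h2]
  calc (orbit δ ρ (v ++ wpow u n)).ncard
      = ((fun l => List.take N l) '' orbit δ ρ (v ++ wpow u n)).ncard :=
        (Set.ncard_image_of_injOn hinj).symm
    _ ≤ {l : List Q | l.length ≤ N}.ncard := by
        apply Set.ncard_le_ncard _ hfin
        rintro l ⟨w, _, rfl⟩
        simp only [Set.mem_setOf_eq, List.length_take]
        omega

lemma rWord_surjective [Finite X] (hinv : ∀ q : Q, Function.Bijective (ρ q))
    (v : List Q) (t : List X) : ∃ s, rWord δ ρ v s = t := by
  haveI : Finite {l : List X // l.length = t.length} :=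
    (List.finite_length_eq X t.length).to_subtype
  set f : {l : List X // l.length = t.length} → {l : List X // l.length = t.length} :=
    fun l => ⟨rWord δ ρ v l.1, by simp [l.2]⟩ with hf
  have finj : Function.Injective f := by
    intro a b hab
    have := rWord_injective δ ρ hinv v (congrArg Subtype.val hab)
    exact Subtype.ext this
  have fsurj := (Finite.injective_iff_surjective).1 finj
  obtain ⟨s, hs⟩ := fsurj ⟨t, rfl⟩
  exact ⟨s.1, congrArg Subtype.val hs⟩

lemma suffix_bound [Finite Q] [Finite X] (hinv : ∀ q : Q, Function.Bijective (ρ q))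
    (u v : List Q) (B : ℕ) (h : ∀ n : ℕ, (orbit δ ρ (v ++ wpow u n)).ncard ≤ B)
    (n : ℕ) : (orbit δ ρ (wpow u n)).ncard ≤ B := by
  have hsub : orbit δ ρ (wpow u n) ⊆
      (List.drop v.length) '' orbit δ ρ (v ++ wpow u n) := by
    rintro w ⟨t, rfl⟩
    obtain ⟨s, hs⟩ := rWord_surjective δ ρ hinv v t
    refine ⟨dWord δ ρ s (v ++ wpow u n), ⟨s, rfl⟩, ?_⟩
    rw [dWord_append_right, hs]
    have : (dWord δ ρ s v).length = v.length := by simp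
    rw [← this, List.drop_left]
  calc (orbit δ ρ (wpow u n)).ncard
      ≤ ((List.drop v.length) '' orbit δ ρ (v ++ wpow u n)).ncard :=
        Set.ncard_le_ncard hsub ((orbit_finite δ ρ _).image _)
    _ ≤ (orbit δ ρ (v ++ wpow u n)).ncard :=
        Set.ncard_image_le (orbit_finite δ ρ _)
    _ ≤ B := h n

end Aux3

section Aux4

variable (δ : X → Q → Q) (ρ : Q → X → X)

lemma sigma_eq_of_le (u : List Q) {n N : ℕ} (h : n ≤ N) {t t' : List X}
    (hEQ : dWord δ ρ t (wpow u N) = dWord δ ρ t' (wpow u N)) :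
    dWord δ ρ t (wpow u n) = dWord δ ρ t' (wpow u n) := by
  have hsplit : wpow u N = wpow u n ++ wpow u (N - n) := by
    rw [← wpow_add]; congr 1; omega
  rw [hsplit, dWord_append_right, dWord_append_right] at hEQ
  exact (List.append_inj hEQ (by simp)).1

lemma wpow_one (u : List Q) : wpow u 1 = u := by simp [wpow_succ]

lemma sigma_step (u : List Q) {t t' : List X}
    (h : ∀ n, dWord δ ρ t (wpow u n) = dWord δ ρ t' (wpow u n)) (n : ℕ) :
    dWord δ ρ (rWord δ ρ u t) (wpow u n) = dWord δ ρ (rWord δ ρ u t') (wpow u n) := by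
  have h1 := h (1 + n)
  rw [wpow_add, dWord_append_right, dWord_append_right] at h1
  have h2 := (List.append_inj h1 (by simpa using congrArg List.length (h 1))).2
  rw [wpow_one] at h2
  exact h2

lemma iterate_length (u : List Q) (j : ℕ) (t : List X) :
    ((rWord δ ρ u)^[j] t).length = t.length := by
  induction j generalizing t with
  | zero => rfl
  | succ j ih => rw [Function.iterate_succ_apply]; simp [ih]

lemma exists_cycle [Finite X] (hinv : ∀ q : Q, Function.Bijective (ρ q))
    (u : List Q) (t : List X) : ∃ r : ℕ, 0 < r ∧ (rWord δ ρ u)^[r] t = t := by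
  haveI : Finite {l : List X // l.length = t.length} :=
    (List.finite_length_eq X t.length).to_subtype
  set g : ℕ → {l : List X // l.length = t.length} :=
    fun j => ⟨(rWord δ ρ u)^[j] t, iterate_length δ ρ u j t⟩ with hg
  obtain ⟨a, b, hab, heq⟩ := Finite.exists_ne_map_eq_of_infinite g
  have heq' : (rWord δ ρ u)^[a] t = (rWord δ ρ u)^[b] t := congrArg Subtype.val heq
  rcases Nat.lt_or_ge a b with hlt | hge
  · refine ⟨b - a, by omega, ?_⟩
    have hb : a + (b - a) = b := by omega
    have : (rWord δ ρ u)^[a] ((rWord δ ρ u)^[b - a] t) = (rWord δ ρ u)^[a] t := by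
      rw [← Function.iterate_add_apply, hb, heq']
    exact ((rWord_injective δ ρ hinv u).iterate a) this
  · have hlt : b < a := by omega
    refine ⟨a - b, by omega, ?_⟩
    have hb : b + (a - b) = a := by omega
    have : (rWord δ ρ u)^[b] ((rWord δ ρ u)^[a - b] t) = (rWord δ ρ u)^[b] t := by
      rw [← Function.iterate_add_apply, hb, heq'.symm]
    exact ((rWord_injective δ ρ hinv u).iterate b) this

end Aux4

section Aux5

variable (δ : X → Q → Q) (ρ : Q → X → X)

lemma exists_q [Finite Q] (u : List Q) (B : ℕ)
    (hB : ∀ n : ℕ, (orbit δ ρ (wpow u n)).ncard ≤ B) (s : List X) :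
    ∃ a q : ℕ, 1 ≤ q ∧ q ≤ B ∧
      ∀ n, dWord δ ρ ((rWord δ ρ u)^[a + q] s) (wpow u n) =
        dWord δ ρ ((rWord δ ρ u)^[a] s) (wpow u n) := by
  classical
  set F := rWord δ ρ u with hF
  have key : ∃ j k : Fin (B + 1), j ≠ k ∧
      ∀ n, dWord δ ρ (F^[j.1] s) (wpow u n) = dWord δ ρ (F^[k.1] s) (wpow u n) := by
    by_contra hcon
    push_neg at hcon
    have hsep : ∀ p : Fin (B + 1) × Fin (B + 1), ∃ n : ℕ, p.1 ≠ p.2 →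
        dWord δ ρ (F^[p.1.1] s) (wpow u n) ≠ dWord δ ρ (F^[p.2.1] s) (wpow u n) := by
      intro p
      by_cases hp : p.1 = p.2
      · exact ⟨0, fun h => absurd hp h⟩
      · obtain ⟨n, hn⟩ := hcon p.1 p.2 hp
        exact ⟨n, fun _ => hn⟩
    choose Np hNp using hsep
    set N := Finset.univ.sup Np with hNdef
    have hwit : ∀ p1 p2 : Fin (B + 1), p1 ≠ p2 →
        dWord δ ρ (F^[p1.1] s) (wpow u N) ≠ dWord δ ρ (F^[p2.1] s) (wpow u N) := by
      intro p1 p2 hne hEQ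
      exact hNp (p1, p2) hne
        (sigma_eq_of_le δ ρ u (Finset.le_sup (Finset.mem_univ (p1, p2))) hEQ)
    set f : Fin (B + 1) → List Q := fun j => dWord δ ρ (F^[j.1] s) (wpow u N) with hfdef
    have hfinj : Function.Injective f := by
      intro j k hjk
      by_contra hne
      exact hwit j k hne hjk
    have hcard : (Finset.image f Finset.univ).card = B + 1 := by
      rw [Finset.card_image_of_injective _ hfinj, Finset.card_univ, Fintype.card_fin]
    have hsub : ↑(Finset.image f Finset.univ) ⊆ orbit δ ρ (wpow u N) := by
      intro w hw
      simp only [Finset.coe_image, Set.mem_image] at hw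
      obtain ⟨j, _, rfl⟩ := hw
      exact dWord_mem_orbit δ ρ _ _
    have hle : (Finset.image f Finset.univ).card ≤ (orbit δ ρ (wpow u N)).ncard := by
      rw [← Set.ncard_coe_finset]
      exact Set.ncard_le_ncard hsub (orbit_finite δ ρ _)
    have := hB N
    omega
  obtain ⟨j, k, hjk, hsig⟩ := key
  rcases Nat.lt_or_ge j.1 k.1 with hlt | hge
  · refine ⟨j.1, k.1 - j.1, by omega, by have := k.2; omega, ?_⟩
    intro n
    have : j.1 + (k.1 - j.1) = k.1 := by omega
    rw [this]
    exact (hsig n).symm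
  · have hlt : k.1 < j.1 := by
      rcases Nat.lt_or_ge k.1 j.1 with h | h
      · exact h
      · exact absurd (Fin.ext (by omega)) hjk
    refine ⟨k.1, j.1 - k.1, by omega, by have := j.2; omega, ?_⟩
    intro n
    have : k.1 + (j.1 - k.1) = j.1 := by omega
    rw [this]
    exact hsig n

lemma period_all [Finite Q] [Finite X] (hinv : ∀ q : Q, Function.Bijective (ρ q))
    (u : List Q) (B : ℕ)
    (hB : ∀ n : ℕ, (orbit δ ρ (wpow u n)).ncard ≤ B) (s : List X) :
    ∀ n, dWord δ ρ ((rWord δ ρ u)^[B.factorial] s) (wpow u n) =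
      dWord δ ρ s (wpow u n) := by
  set F := rWord δ ρ u with hF
  obtain ⟨a, q, hq1, hqB, hper⟩ := exists_q δ ρ u B hB s
  obtain ⟨r, hr0, hrfix⟩ := exists_cycle δ ρ hinv u s
  -- shift the period forward
  have hshift : ∀ c n, dWord δ ρ (F^[a + c + q] s) (wpow u n) =
      dWord δ ρ (F^[a + c] s) (wpow u n) := by
    intro c
    induction c with
    | zero => exact hper
    | succ c ih =>
        intro n
        have e1 : a + (c + 1) + q = (a + c + q) + 1 := by omega
        have e2 : a + (c + 1) = (a + c) + 1 := by omega
        rw [e1, e2, Function.iterate_succ_apply', Function.iterate_succ_apply']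
        exact sigma_step δ ρ u ih n
  have hcyc : ∀ c, F^[c * r] s = s := by
    intro c
    induction c with
    | zero => simp
    | succ c ih =>
        have : (c + 1) * r = r + c * r := by ring
        rw [this, Function.iterate_add_apply, ih, hrfix]
  -- q is a full period
  have hfull : ∀ j n, dWord δ ρ (F^[j + q] s) (wpow u n) =
      dWord δ ρ (F^[j] s) (wpow u n) := by
    intro j n
    have har : a ≤ j + a * r := by
      have : a ≤ a * r := Nat.le_mul_of_pos_right a hr0
      omega
    have e1 : j + q + a * r = a + (j + a * r - a) + q := by omega
    have e2 : j + a * r = a + (j + a * r - a) := by omega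
    calc dWord δ ρ (F^[j + q] s) (wpow u n)
        = dWord δ ρ (F^[j + q] (F^[a * r] s)) (wpow u n) := by rw [hcyc a]
      _ = dWord δ ρ (F^[j + q + a * r] s) (wpow u n) := by
          rw [← Function.iterate_add_apply]
      _ = dWord δ ρ (F^[a + (j + a * r - a) + q] s) (wpow u n) := by rw [e1]
      _ = dWord δ ρ (F^[a + (j + a * r - a)] s) (wpow u n) := hshift _ n
      _ = dWord δ ρ (F^[j + a * r] s) (wpow u n) := by rw [← e2]
      _ = dWord δ ρ (F^[j] (F^[a * r] s)) (wpow u n) := by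
          rw [← Function.iterate_add_apply]
      _ = dWord δ ρ (F^[j] s) (wpow u n) := by rw [hcyc a]
  -- multiples of q are periods
  have hmult : ∀ c n, dWord δ ρ (F^[c * q] s) (wpow u n) = dWord δ ρ s (wpow u n) := by
    intro c
    induction c with
    | zero => intro n; simp
    | succ c ih =>
        intro n
        have : (c + 1) * q = c * q + q := by ring
        rw [this, hfull (c * q) n]
        exact ih n
  have hdvd : q ∣ B.factorial := Nat.dvd_factorial (by omega) hqB
  obtain ⟨c, hc⟩ := hdvd
  intro n
  have : B.factorial = c * q := by rw [hc, Nat.mul_comm]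
  rw [this]
  exact hmult c n

end Aux5

section Aux6

variable (δ : X → Q → Q) (ρ : Q → X → X)

lemma finite_order_of_bounded [Finite Q] [Finite X]
    (hinv : ∀ q : Q, Function.Bijective (ρ q)) (u : List Q) (B : ℕ)
    (hB : ∀ n : ℕ, (orbit δ ρ (wpow u n)).ncard ≤ B) :
    ∃ k : ℕ, 0 < k ∧ rWord δ ρ (wpow u k) = id := by
  classical
  set F := rWord δ ρ u with hF
  set P := B.factorial with hP
  have hP0 : 0 < P := Nat.factorial_pos B
  have hper : ∀ (s : List X) (n : ℕ),
      dWord δ ρ (F^[P] s) (wpow u n) = dWord δ ρ s (wpow u n) :=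
    fun s => period_all δ ρ hinv u B hB s
  set G := fun t : List X => F^[P] t with hG
  have hGinv : ∀ (j : ℕ) (s : List X) (n : ℕ),
      dWord δ ρ (G^[j] s) (wpow u n) = dWord δ ρ s (wpow u n) := by
    intro j
    induction j with
    | zero => intro s n; rfl
    | succ j ih =>
        intro s n
        rw [Function.iterate_succ_apply', hG]
        rw [hper (G^[j] s) n]
        exact ih s n
  -- the permutation attached to a word s
  set e : List X → Equiv.Perm X := fun s =>
    Equiv.ofBijective _ (thX_bijective ρ hinv (dWord δ ρ s (wpow u P))) with he
  have he_app : ∀ (s : List X) (i : X), e s i = thX ρ (dWord δ ρ s (wpow u P)) i :=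
    fun s i => rfl
  have hGdef : ∀ t : List X, G t = rWord δ ρ (wpow u P) t := by
    intro t
    rw [rWord_wpow]
  have hGnil : ∀ j : ℕ, G^[j] ([] : List X) = [] := by
    intro j
    induction j with
    | zero => rfl
    | succ j ih =>
        rw [Function.iterate_succ_apply', ih, hGdef, rWord_nil_right]
  have key : ∀ (s : List X) (i : X) (j : ℕ),
      G^[j] (s ++ [i]) = G^[j] s ++ [((e s) ^ j : Equiv.Perm X) i] := by
    intro s i j
    induction j with
    | zero => simp
    | succ j ih =>
        rw [Function.iterate_succ_apply', ih, hGdef, rWord_append_right,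
          rWord_singleton, hGinv j s P, ← hGdef, ← Function.iterate_succ_apply' G j]
        have : thX ρ (dWord δ ρ s (wpow u P)) (((e s) ^ j) i) =
            ((e s) ^ (j + 1) : Equiv.Perm X) i := by
          rw [pow_succ' (e s) j, Equiv.Perm.mul_apply, he_app]
        rw [this]
  set D := Nat.card (Equiv.Perm X) with hD
  have hD0 : 0 < D := Nat.card_pos
  have hfix : ∀ s : List X, G^[D] s = s := by
    intro s
    induction s using List.reverseRecOn with
    | nil => exact hGnil D
    | append_singleton s i ih =>
        rw [key s i D, ih]
        have : ((e s) ^ D : Equiv.Perm X) = 1 := pow_card_eq_one'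
        rw [this]
        simp
  refine ⟨P * D, Nat.mul_pos hP0 hD0, ?_⟩
  funext s
  rw [rWord_wpow, Function.iterate_mul]
  exact hfix s

end Aux6

/-- For a nonempty word `u` over `Q`, the following are equivalent:
(i) `ρ_u` has finite order; (ii) the orbits of the `u^n` have bounded size;
(iii) for some word `v` the orbits of the `v u^n` have bounded size;
(iv) for every word `v` the orbits of the `v u^n` have bounded size. -/
theorem finite_order_tfae
    {Q X : Type*} [Finite Q] [Finite X] [Nonempty Q] [Nonempty X]
    (δ : X → Q → Q) (ρ : Q → X → X)
    (hinv : ∀ q : Q, Function.Bijective (ρ q))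
    (hrev : ∀ i : X, Function.Bijective (δ i))
    (u : List Q) (hu : u ≠ []) :
    List.TFAE
      [ ∃ k : ℕ, 0 < k ∧ rWord δ ρ (wpow u k) = id,
        ∃ B : ℕ, ∀ n : ℕ, (orbit δ ρ (wpow u n)).ncard ≤ B,
        ∃ v : List Q, ∃ B : ℕ, ∀ n : ℕ, (orbit δ ρ (v ++ wpow u n)).ncard ≤ B,
        ∀ v : List Q, ∃ B : ℕ, ∀ n : ℕ, (orbit δ ρ (v ++ wpow u n)).ncard ≤ B ] := by
  classical
  tfae_have 1 → 4 := by
    rintro ⟨k, hk0, hk⟩ v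
    exact ⟨{l : List Q | l.length ≤ v.length + k * u.length}.ncard,
      fun n => bounded_of_finite_order δ ρ u k hk0 (fun s => congrFun hk s) v n⟩
  tfae_have 4 → 3 := by
    intro h
    exact ⟨[], h []⟩
  tfae_have 3 → 2 := by
    rintro ⟨v, B, h⟩
    exact ⟨B, suffix_bound δ ρ hinv u v B h⟩
  tfae_have 2 → 1 := by
    rintro ⟨B, h⟩
    exact finite_order_of_bounded δ ρ hinv u B h
  tfae_finish

end MealyFormal
end

section
/- Under the standing setup (connected 3-state invertible-reversible A, 0 < c = cd(A) < ∞, Q^{c+1} splitting into exactly two orbits with reduction orbit O2 of size 2·3^c): for every s ∈ Q^c there are exactly two states x ∈ Q with s x ∈ O2; consequently, every orbital word w of length at least c extends to an orbital word w x for exactly two states x ∈ Q. -/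
namespace MealyFormal

variable {Q X : Type*}

section Aux

variable (δ : X → Q → Q) (ρ : Q → X → X)

lemma dExt_length (i : X) (u : List Q) : (dExt δ ρ i u).length = u.length := by
  induction u generalizing i with
  | nil => rfl
  | cons x w ih => simp [dExt, ih]

lemma dWord_length (s : List X) (u : List Q) : (dWord δ ρ s u).length = u.length := by
  induction s generalizing u with
  | nil => rfl
  | cons i s ih => simp [dWord, ih, dExt_length]

/-- The letter obtained by pushing `i` through the word `u`. -/
def cross : X → List Q → X
  | i, [] => i
  | i, x :: u => cross (ρ x i) u

lemma dExt_append_singleton (i : X) (u : List Q) (x : Q) :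
    dExt δ ρ i (u ++ [x]) = dExt δ ρ i u ++ [δ (cross ρ i u) x] := by
  induction u generalizing i with
  | nil => simp [dExt, cross]
  | cons y w ih => simp [dExt, cross, ih]

/-- The permutation of the last letter induced by `dWord s` on words extending `u`. -/
def lastF : List X → List Q → Q → Q
  | [], _ => id
  | i :: s, u => lastF s (dExt δ ρ i u) ∘ δ (cross ρ i u)

lemma dWord_append_singleton (s : List X) (u : List Q) (x : Q) :
    dWord δ ρ s (u ++ [x]) = dWord δ ρ s u ++ [lastF δ ρ s u x] := by
  induction s generalizing u x with
  | nil => rfl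
  | cons i s ih => simp [dWord, lastF, dExt_append_singleton, ih]

lemma lastF_bijective (hδ : ∀ i, Function.Bijective (δ i)) (s : List X) (u : List Q) :
    Function.Bijective (lastF δ ρ s u) := by
  induction s generalizing u with
  | nil => exact Function.bijective_id
  | cons i s ih => exact (ih _).comp (hδ _)

lemma dWord_append (s t : List X) (u : List Q) :
    dWord δ ρ (s ++ t) u = dWord δ ρ t (dWord δ ρ s u) := by
  induction s generalizing u with
  | nil => rfl
  | cons i s ih => simp [dWord, ih]

lemma inOrbit_refl (u : List Q) : InOrbit δ ρ u u := ⟨[], rfl⟩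

lemma inOrbit_trans {u v w : List Q} (h1 : InOrbit δ ρ u v) (h2 : InOrbit δ ρ v w) :
    InOrbit δ ρ u w := by
  obtain ⟨s, hs⟩ := h1
  obtain ⟨t, ht⟩ := h2
  exact ⟨s ++ t, by rw [dWord_append, hs, ht]⟩

lemma dExt_injective (hδ : ∀ i, Function.Bijective (δ i)) (i : X) :
    Function.Injective (dExt δ ρ i) := by
  intro u v h
  induction u generalizing i v with
  | nil =>
    cases v with
    | nil => rfl
    | cons y v => simp [dExt] at h
  | cons x w ih =>
    cases v with
    | nil => simp [dExt] at h
    | cons y v =>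
      simp only [dExt, List.cons.injEq] at h
      obtain ⟨h1, h2⟩ := h
      have hxy : x = y := (hδ i).1 h1
      subst hxy
      have hw : w = v := ih _ h2
      rw [hw]

lemma dWord_injective (hδ : ∀ i, Function.Bijective (δ i)) (s : List X) :
    Function.Injective (dWord δ ρ s) := by
  induction s with
  | nil => exact fun _ _ h => h
  | cons i s ih => exact fun u v h => dExt_injective δ ρ hδ i (ih h)

lemma inOrbit_symm [Finite Q] (hδ : ∀ i, Function.Bijective (δ i)) {u v : List Q}
    (h : InOrbit δ ρ u v) : InOrbit δ ρ v u := by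
  obtain ⟨s, hsv⟩ := h
  set n := u.length with hn
  let g : List.Vector Q n → List.Vector Q n :=
    fun w => ⟨dWord δ ρ s w.1, by rw [dWord_length, w.2]⟩
  have hg : Function.Injective g := by
    intro a b hab
    exact Subtype.ext (dWord_injective δ ρ hδ s (congrArg Subtype.val hab))
  -- iterates of g correspond to dWord of flattened replicates
  have hiter : ∀ (m : ℕ) (w : List.Vector Q n),
      (g^[m] w).1 = dWord δ ρ (List.replicate m s).flatten w.1 := by
    intro m
    induction m with
    | zero => intro w; rfl
    | succ m ih =>
      intro w
      rw [Function.iterate_succ_apply]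
      rw [ih (g w)]
      show _ = dWord δ ρ (List.replicate (m+1) s).flatten w.1
      rw [List.replicate_succ, List.flatten_cons, dWord_append]
  have hfin : Finite (List.Vector Q n) := by infer_instance
  obtain ⟨a, b, hab, heq⟩ :=
    Finite.exists_ne_map_eq_of_infinite (fun m : ℕ => g^[m] ⟨u, rfl⟩)
  wlog hlt : a < b generalizing a b
  · exact this b a hab.symm heq.symm (by omega)
  have hcancel : g^[b - a] ⟨u, rfl⟩ = ⟨u, rfl⟩ := by
    apply hg.iterate a
    exact (Function.iterate_add_apply g a (b - a) _).symm.trans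
      ((congrArg (fun k => g^[k] ⟨u, rfl⟩) (Nat.add_sub_cancel' (le_of_lt hlt))).trans heq.symm)
  have hpos : 0 < b - a := by omega
  -- g^[b-a] = g^[b-a-1] ∘ g
  have key : g^[b - a - 1] (g ⟨u, rfl⟩) = ⟨u, rfl⟩ := by
    have h1 : b - a - 1 + 1 = b - a := by omega
    exact (Function.iterate_succ_apply g _ _).symm.trans
      ((congrArg (fun k => g^[k] ⟨u, rfl⟩) h1).trans hcancel)
  have hgu : (g ⟨u, rfl⟩ : List.Vector Q n).1 = v := hsv
  refine ⟨(List.replicate (b - a - 1) s).flatten, ?_⟩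
  have := hiter (b - a - 1) (g ⟨u, rfl⟩)
  rw [key] at this
  rw [hgu] at this
  exact this.symm

variable {c : ℕ} {O2 : Set (List Q)}

lemma mem_O2_length (hs : StandingSetup δ ρ c O2) {u : List Q} (hu : u ∈ O2) :
    u.length = c + 1 := by
  obtain ⟨w, hwl, hwo⟩ := hs.O2_is_orbit
  rw [hwo] at hu
  obtain ⟨t, ht⟩ := hu
  rw [← ht, dWord_length, hwl]

lemma O2_invariant (hs : StandingSetup δ ρ c O2) {u v : List Q}
    (h : InOrbit δ ρ u v) : u ∈ O2 ↔ v ∈ O2 := by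
  have : Finite Q := Nat.finite_of_card_ne_zero (by rw [hs.card_three]; omega)
  obtain ⟨w, hwl, hwo⟩ := hs.O2_is_orbit
  rw [hwo]
  constructor
  · exact fun hu => inOrbit_trans δ ρ hu h
  · exact fun hv => inOrbit_trans δ ρ hv (inOrbit_symm δ ρ hs.reversible h)

lemma fiber_const (hs : StandingSetup δ ρ c O2) {s t : List Q}
    (hsl : s.length = c) (htl : t.length = c) :
    {x : Q | s ++ [x] ∈ O2}.ncard = {x : Q | t ++ [x] ∈ O2}.ncard := by
  have hQ : Finite Q := Nat.finite_of_card_ne_zero (by rw [hs.card_three]; omega)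
  obtain ⟨a, ha⟩ := hs.trans_c s t hsl htl
  set f := lastF δ ρ a s with hf
  have hfb : Function.Bijective f := lastF_bijective δ ρ hs.reversible a s
  have hset : {x : Q | s ++ [x] ∈ O2} = f ⁻¹' {x : Q | t ++ [x] ∈ O2} := by
    ext x
    simp only [Set.mem_setOf_eq, Set.mem_preimage]
    have horb : InOrbit δ ρ (s ++ [x]) (t ++ [f x]) :=
      ⟨a, by rw [dWord_append_singleton, ha]⟩
    exact O2_invariant δ ρ hs horb
  rw [hset]
  have himg : f '' (f ⁻¹' {x : Q | t ++ [x] ∈ O2}) = {x : Q | t ++ [x] ∈ O2} :=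
    Set.image_preimage_eq _ hfb.2
  calc (f ⁻¹' {x : Q | t ++ [x] ∈ O2}).ncard
      = (f '' (f ⁻¹' {x : Q | t ++ [x] ∈ O2})).ncard :=
        (Set.ncard_image_of_injective _ hfb.1).symm
    _ = {x : Q | t ++ [x] ∈ O2}.ncard := by rw [himg]

lemma fiber_two (hs : StandingSetup δ ρ c O2) {s : List Q} (hsl : s.length = c) :
    {x : Q | s ++ [x] ∈ O2}.ncard = 2 := by
  classical
  have hQ : Finite Q := Nat.finite_of_card_ne_zero (by rw [hs.card_three]; omega)
  have hQf : Fintype Q := Fintype.ofFinite Q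
  -- O2 is finite
  have hO2fin : O2.Finite := by
    by_contra h
    have := Set.Infinite.ncard h
    rw [hs.O2_card] at this
    have : 0 < 2 * 3 ^ c := by positivity
    omega
  set T : Finset (List Q) := hO2fin.toFinset with hT
  set L : Finset (List Q) := Finset.image (fun w : List.Vector Q c => w.1) Finset.univ
    with hL
  have hmemL : ∀ l : List Q, l ∈ L ↔ l.length = c := by
    intro l
    simp only [hL, Finset.mem_image, Finset.mem_univ, true_and]
    constructor
    · rintro ⟨w, rfl⟩; exact w.2
    · intro hl; exact ⟨⟨l, hl⟩, rfl⟩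
  have hcardL : L.card = 3 ^ c := by
    have hinj : Function.Injective (fun w : List.Vector Q c => w.1) :=
      fun a b h => Subtype.ext h
    rw [hL, Finset.card_image_of_injective _ hinj]
    rw [Finset.card_univ, card_vector, ← Nat.card_eq_fintype_card, hs.card_three]
  have hmap : ∀ w ∈ T, w.dropLast ∈ L := by
    intro w hw
    rw [hT, Set.Finite.mem_toFinset] at hw
    rw [hmemL, List.length_dropLast, mem_O2_length δ ρ hs hw]
    omega
  have hsum := Finset.card_eq_sum_card_fiberwise hmap
  -- each fiber has the same cardinality n := ncard over s
  set n := {x : Q | s ++ [x] ∈ O2}.ncard with hn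
  have hfiber : ∀ t ∈ L, (T.filter (fun w => w.dropLast = t)).card = n := by
    intro t htL
    have htl : t.length = c := (hmemL t).mp htL
    have himg : T.filter (fun w => w.dropLast = t)
        = Finset.image (fun x : Q => t ++ [x])
            (Finset.univ.filter (fun x : Q => t ++ [x] ∈ O2)) := by
      ext w
      simp only [Finset.mem_filter, Finset.mem_image, Finset.mem_univ, true_and,
        hT, Set.Finite.mem_toFinset]
      constructor
      · rintro ⟨hw, hdrop⟩
        have hne : w ≠ [] := by
          intro h
          have := mem_O2_length δ ρ hs hw
          rw [h] at this; simp at this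
        refine ⟨w.getLast hne, ?_, ?_⟩
        · rw [← hdrop, List.dropLast_append_getLast hne]; exact hw
        · rw [← hdrop, List.dropLast_append_getLast hne]
      · rintro ⟨x, hx, rfl⟩
        exact ⟨hx, List.dropLast_concat⟩
    rw [himg, Finset.card_image_of_injective _ (fun a b h => by
      simpa using List.append_cancel_left h)]
    have hns : {x : Q | t ++ [x] ∈ O2}.ncard = n :=
      fiber_const δ ρ hs htl hsl
    rw [← hns, Set.ncard_eq_toFinset_card', Set.toFinset_setOf]
  rw [Finset.sum_congr rfl hfiber, Finset.sum_const, smul_eq_mul, hcardL] at hsum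
  have hTcard : T.card = 2 * 3 ^ c := by
    rw [hT, ← Set.ncard_eq_toFinset_card _ hO2fin, hs.O2_card]
  rw [hTcard] at hsum
  have h3 : 0 < 3 ^ c := by positivity
  -- 2 * 3^c = 3^c * n
  have : n = 2 := by
    have := hsum
    nlinarith
  exact this

lemma suffix_length_c1 {w f : List Q} {x : Q} (hc : c ≤ w.length)
    (hf : f <:+ (w ++ [x])) (hfl : f.length = c + 1) :
    f = w.drop (w.length - c) ++ [x] := by
  obtain ⟨p, hp⟩ := hf
  have hne : f ≠ [] := by intro h; rw [h] at hfl; simp at hfl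
  have hsplit : f.dropLast ++ [f.getLast hne] = f := List.dropLast_append_getLast hne
  have heq : (p ++ f.dropLast) ++ [f.getLast hne] = w ++ [x] := by
    rw [List.append_assoc, hsplit, hp]
  have h1 : p ++ f.dropLast = w := by
    have := congrArg List.dropLast heq
    rwa [List.dropLast_concat, List.dropLast_concat] at this
  have h2 : f.getLast hne = x := by
    have := congrArg (fun l => List.getLast? l) heq
    simp only [List.getLast?_concat] at this
    exact Option.some.inj this
  have hdl : f.dropLast.length = c := by
    rw [List.length_dropLast, hfl]; omega
  have h3 : f.dropLast = w.drop (w.length - c) := by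
    have : List.drop p.length w = f.dropLast := by
      rw [← h1, List.drop_left]
    rw [← this]
    congr 1
    have : p.length + f.dropLast.length = w.length := by
      rw [← h1, List.length_append]
    omega
  rw [← hsplit, h3, h2]

lemma infix_concat_cases {w f : List Q} {x : Q} (hf : f <:+: (w ++ [x])) :
    f <:+: w ∨ f <:+ (w ++ [x]) := by
  obtain ⟨p, t, ht⟩ := hf
  rcases List.eq_nil_or_concat t with rfl | ⟨t', y, rfl⟩
  · right
    exact ⟨p, by simpa using ht⟩
  · left
    have heq : (p ++ f ++ t') ++ [y] = w ++ [x] := by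
      rw [← ht]; simp
    have := congrArg List.dropLast heq
    rw [List.dropLast_concat, List.dropLast_concat] at this
    exact ⟨p, t', this⟩

end Aux

/-- Under the standing setup, every `s ∈ Q^c` has exactly two
extensions `s ++ [x]` in the reduction orbit `O2`; consequently, every orbital word
of length at least `c` extends to an orbital word by exactly two states. -/
theorem orbital_two_extensions
    {Q X : Type*} (δ : X → Q → Q) (ρ : Q → X → X) (c : ℕ) (O2 : Set (List Q))
    (hs : StandingSetup δ ρ c O2) :
    (∀ s : List Q, s.length = c → {x : Q | s ++ [x] ∈ O2}.ncard = 2) ∧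
    (∀ w : List Q, Orbital c O2 w → c ≤ w.length →
      {x : Q | Orbital c O2 (w ++ [x])}.ncard = 2) := by
  classical
  have part1 : ∀ s : List Q, s.length = c → {x : Q | s ++ [x] ∈ O2}.ncard = 2 :=
    fun s hsl => fiber_two δ ρ hs hsl
  refine ⟨part1, ?_⟩
  intro w hw hcw
  set sfx := w.drop (w.length - c) with hsfx
  have hsfxl : sfx.length = c := by
    rw [hsfx, List.length_drop]; omega
  have hsfx_suffix : sfx <:+ w := List.drop_suffix _ _
  have hkey : {x : Q | Orbital c O2 (w ++ [x])} = {x : Q | sfx ++ [x] ∈ O2} := by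
    ext x
    simp only [Set.mem_setOf_eq]
    constructor
    · intro horb
      apply horb
      · rw [List.length_append, hsfxl]; simp
      · obtain ⟨p, hp⟩ := hsfx_suffix
        exact ⟨p, [], by rw [← List.append_assoc, hp]; simp⟩
    · intro hmem
      intro f hfl hfinf
      rcases infix_concat_cases hfinf with hinf | hsuf
      · exact hw f hfl hinf
      · rw [suffix_length_c1 hcw hsuf hfl]
        exact hmem
  rw [hkey]
  exact part1 sfx hsfxl

end MealyFormal
end
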